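/- Let t ∈ ℝ with t ∉ {−1,0,1}, and let x, y ∈ ℝ³ with x ≠ 0 and y ≠ 0. If p_t(x,y) = 0, then Φ_t(xxᵀ)·y = 0, i.e., y lies in the kernel of the positive semidefinite matrix Φ_t(xxᵀ). -/

import Mathlib

open Matrix

/-- The map `Φ_t` applied to a `3 × 3` matrix `A`. -/
def Phi (t : ℝ) (A : Matrix (Fin 3) (Fin 3) ℝ) : Matrix (Fin 3) (Fin 3) ℝ :=
  !![(t^2-1)^2 * A 0 0 + A 1 1 + t^4 * A 2 2, -(t^4-t^2+1) * A 0 1, -(t^4-t^2+1) * A 0 2;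
     -(t^4-t^2+1) * A 1 0, (t^2-1)^2 * A 1 1 + A 2 2 + t^4 * A 0 0, -(t^4-t^2+1) * A 1 2;
     -(t^4-t^2+1) * A 2 0, -(t^4-t^2+1) * A 2 1, (t^2-1)^2 * A 2 2 + A 0 0 + t^4 * A 1 1]

/-- The biquadratic form `p_t(x, y) = yᵀ Φ_t(xxᵀ) y`. -/
def pform (t : ℝ) (x y : Fin 3 → ℝ) : ℝ :=
  y ⬝ᵥ (Phi t (vecMulVec x x)).mulVec y

/-! `Φ_t(xxᵀ)` is positive semidefinite for every `t` and `x`, and a vector on which a positive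
semidefinite quadratic form vanishes lies in the kernel of its matrix.

Semidefiniteness is checked on principal minors. With `s = t²` and `a, b, d` the squares of the
coordinates of `x`, the `2 × 2` principal minors are explicit sums of nonnegative terms, and
`det Φ_t(xxᵀ) = (s - 1)² G(s, a, b, d)` for a cubic `G` invariant under cyclic rotation of
`(a, b, d)`; once `a` is the smallest of the three, `G` splits into two visibly nonnegative
terms. Nonnegative principal minors of a symmetric `3 × 3` matrix `A` give semidefiniteness by
completing squares (the Schur complement) for `A + εI`, which has positive leading minors, and
letting `ε → 0`. -/

lemma quadForm_nonneg_of_leadingMinors {a₀ a₁ a₂ b₀₁ b₀₂ b₁₂ : ℝ} (ha₀ : 0 < a₀)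
    (hm : 0 < a₀ * a₁ - b₀₁ ^ 2)
    (hdet : 0 ≤ a₀ * a₁ * a₂ + 2 * b₀₁ * b₀₂ * b₁₂ - a₀ * b₁₂ ^ 2 - a₁ * b₀₂ ^ 2 - a₂ * b₀₁ ^ 2)
    (y₀ y₁ y₂ : ℝ) :
    0 ≤ a₀ * y₀ ^ 2 + a₁ * y₁ ^ 2 + a₂ * y₂ ^ 2
      + 2 * (b₀₁ * y₀ * y₁ + b₀₂ * y₀ * y₂ + b₁₂ * y₁ * y₂) := by
  rw [← mul_nonneg_iff_of_pos_left (mul_pos hm ha₀)]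
  have key : (a₀ * a₁ - b₀₁ ^ 2) * a₀ * (a₀ * y₀ ^ 2 + a₁ * y₁ ^ 2 + a₂ * y₂ ^ 2
        + 2 * (b₀₁ * y₀ * y₁ + b₀₂ * y₀ * y₂ + b₁₂ * y₁ * y₂))
      = (a₀ * a₁ - b₀₁ ^ 2) * (a₀ * y₀ + b₀₁ * y₁ + b₀₂ * y₂) ^ 2
        + ((a₀ * a₁ - b₀₁ ^ 2) * y₁ + (a₀ * b₁₂ - b₀₁ * b₀₂) * y₂) ^ 2
        + a₀ * (a₀ * a₁ * a₂ + 2 * b₀₁ * b₀₂ * b₁₂ - a₀ * b₁₂ ^ 2 - a₁ * b₀₂ ^ 2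
          - a₂ * b₀₁ ^ 2) * y₂ ^ 2 := by
    ring
  rw [key]
  have hm' := hm.le
  positivity

lemma quadForm_nonneg_of_principalMinors_nonneg {a₀ a₁ a₂ b₀₁ b₀₂ b₁₂ : ℝ}
    (ha₀ : 0 ≤ a₀) (ha₁ : 0 ≤ a₁) (ha₂ : 0 ≤ a₂)
    (hm₀₁ : 0 ≤ a₀ * a₁ - b₀₁ ^ 2) (hm₀₂ : 0 ≤ a₀ * a₂ - b₀₂ ^ 2)
    (hm₁₂ : 0 ≤ a₁ * a₂ - b₁₂ ^ 2)
    (hdet : 0 ≤ a₀ * a₁ * a₂ + 2 * b₀₁ * b₀₂ * b₁₂ - a₀ * b₁₂ ^ 2 - a₁ * b₀₂ ^ 2 - a₂ * b₀₁ ^ 2)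
    (y₀ y₁ y₂ : ℝ) :
    0 ≤ a₀ * y₀ ^ 2 + a₁ * y₁ ^ 2 + a₂ * y₂ ^ 2
      + 2 * (b₀₁ * y₀ * y₁ + b₀₂ * y₀ * y₂ + b₁₂ * y₁ * y₂) := by
  refine le_of_forall_pos_le_add fun δ hδ => ?_
  set Y := y₀ ^ 2 + y₁ ^ 2 + y₂ ^ 2
  have hY : 0 < Y + 1 := by positivity
  set ε := δ / (Y + 1)
  have hε : 0 < ε := by positivity
  have hεY : ε * Y ≤ δ := by
    rw [div_mul_eq_mul_div, div_le_iff₀ hY]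
    nlinarith
  have hshift := quadForm_nonneg_of_leadingMinors (a₀ := a₀ + ε) (a₁ := a₁ + ε) (a₂ := a₂ + ε)
    (b₀₁ := b₀₁) (b₀₂ := b₀₂) (b₁₂ := b₁₂) (by positivity)
    (by nlinarith) (by nlinarith [mul_pos hε hε, mul_pos (mul_pos hε hε) hε]) y₀ y₁ y₂
  nlinarith

theorem Matrix.posSemidef_of_principalMinors_nonneg_fin_three {A : Matrix (Fin 3) (Fin 3) ℝ}
    (hA : A.IsHermitian) (hdiag : ∀ i, 0 ≤ A i i)
    (h₀₁ : 0 ≤ A 0 0 * A 1 1 - A 0 1 * A 1 0) (h₀₂ : 0 ≤ A 0 0 * A 2 2 - A 0 2 * A 2 0)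
    (h₁₂ : 0 ≤ A 1 1 * A 2 2 - A 1 2 * A 2 1) (hdet : 0 ≤ A.det) : A.PosSemidef := by
  have hsymm : ∀ i j, A j i = A i j := fun i j => by simpa using hA.apply i j
  rw [det_fin_three] at hdet
  rw [hsymm 0 1] at h₀₁ hdet
  rw [hsymm 0 2] at h₀₂ hdet
  rw [hsymm 1 2] at h₁₂ hdet
  refine .of_dotProduct_mulVec_nonneg hA fun y => ?_
  refine (quadForm_nonneg_of_principalMinors_nonneg (b₀₁ := A 0 1) (b₀₂ := A 0 2) (b₁₂ := A 1 2)
    (hdiag 0) (hdiag 1) (hdiag 2) (by linarith) (by linarith) (by linarith) (by linarith)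
    (y 0) (y 1) (y 2)).trans_eq ?_
  simp only [dotProduct, Pi.star_apply, star_trivial, mulVec, Fin.sum_univ_three, hsymm 0 1,
    hsymm 0 2, hsymm 1 2]
  ring

/-- The cubic `G` with `det Φ_t(xxᵀ) = (t² - 1)² G(t², x₀², x₁², x₂²)`. -/
def detCubic (s a b d : ℝ) : ℝ :=
  s ^ 2 * (a ^ 3 + b ^ 3 + d ^ 3) + (1 - 2 * s ^ 3) * (a ^ 2 * d + a * b ^ 2 + b * d ^ 2)
    + (s ^ 4 - 2 * s) * (a ^ 2 * b + b ^ 2 * d + d ^ 2 * a)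
    + (6 * s ^ 2 - 3 * (s ^ 2 - s + 1) ^ 2) * (a * b * d)

lemma detCubic_rotate (s a b d : ℝ) : detCubic s a b d = detCubic s b d a := by
  unfold detCubic; ring

lemma detCubic_nonneg_of_le {s a b d : ℝ} (ha : 0 ≤ a) (hab : a ≤ b) (had : a ≤ d) :
    0 ≤ detCubic s a b d := by
  obtain ⟨u, hu, rfl⟩ : ∃ u, 0 ≤ u ∧ b = a + u := ⟨b - a, by linarith, by ring⟩
  obtain ⟨v, hv, rfl⟩ : ∃ v, 0 ≤ v ∧ d = a + v := ⟨d - a, by linarith, by ring⟩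
  have key : detCubic s a (a + u) (a + v)
      = (s ^ 2 - s + 1) ^ 2 * a * ((u - v) ^ 2 + u * v) + (s * u - v) ^ 2 * (u + s ^ 2 * v) := by
    unfold detCubic; ring
  rw [key]
  positivity

lemma detCubic_nonneg {s a b d : ℝ} (ha : 0 ≤ a) (hb : 0 ≤ b) (hd : 0 ≤ d) :
    0 ≤ detCubic s a b d := by
  rcases le_total a b with hab | hba <;> rcases le_total a d with had | hda <;>
    rcases le_total b d with hbd | hdb
  all_goals first
    | exact detCubic_nonneg_of_le ha hab had
    | rw [detCubic_rotate]; exact detCubic_nonneg_of_le hb hbd (by linarith)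
    | rw [← detCubic_rotate]; exact detCubic_nonneg_of_le hd (by linarith) (by linarith)

lemma det_Phi_vecMulVec (t : ℝ) (x : Fin 3 → ℝ) :
    (Phi t (vecMulVec x x)).det
      = (t ^ 2 - 1) ^ 2 * detCubic (t ^ 2) (x 0 ^ 2) (x 1 ^ 2) (x 2 ^ 2) := by
  simp only [det_fin_three, Phi, vecMulVec, of_apply, cons_val', cons_val_zero, cons_val_fin_one,
    cons_val_one, cons_val]
  unfold detCubic
  ring

lemma principalMinor_Phi_nonneg {s a b d : ℝ} (ha : 0 ≤ a) (hb : 0 ≤ b) (hd : 0 ≤ d) :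
    0 ≤ ((s - 1) ^ 2 * a + b + s ^ 2 * d) * ((s - 1) ^ 2 * b + d + s ^ 2 * a)
      - (s ^ 2 - s + 1) ^ 2 * (a * b) := by
  have key : ((s - 1) ^ 2 * a + b + s ^ 2 * d) * ((s - 1) ^ 2 * b + d + s ^ 2 * a)
        - (s ^ 2 - s + 1) ^ 2 * (a * b)
      = (s - 1) ^ 2 * (s * a - b) ^ 2 + (s - 1) ^ 2 * (a * d) + b * d
        + s ^ 2 * (s - 1) ^ 2 * (b * d) + s ^ 2 * d ^ 2 + s ^ 4 * (a * d) := by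
    ring
  rw [key]
  positivity

theorem posSemidef_Phi_vecMulVec (t : ℝ) (x : Fin 3 → ℝ) :
    (Phi t (vecMulVec x x)).PosSemidef := by
  have hsq (i : Fin 3) : 0 ≤ x i ^ 2 := sq_nonneg (x i)
  refine posSemidef_of_principalMinors_nonneg_fin_three ?_ ?_ ?_ ?_ ?_ ?_
  · ext i j
    fin_cases i <;> fin_cases j <;> simp [Phi, vecMulVec, mul_comm]
  · intro i
    fin_cases i <;> simp [Phi, vecMulVec, ← sq] <;> positivity
  · exact (principalMinor_Phi_nonneg (s := t ^ 2) (hsq 0) (hsq 1) (hsq 2)).trans_eq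
      (by simp [Phi, vecMulVec]; ring)
  · exact (principalMinor_Phi_nonneg (s := t ^ 2) (hsq 2) (hsq 0) (hsq 1)).trans_eq
      (by simp [Phi, vecMulVec]; ring)
  · exact (principalMinor_Phi_nonneg (s := t ^ 2) (hsq 1) (hsq 2) (hsq 0)).trans_eq
      (by simp [Phi, vecMulVec]; ring)
  · rw [det_Phi_vecMulVec]
    exact mul_nonneg (sq_nonneg _) (detCubic_nonneg (hsq 0) (hsq 1) (hsq 2))

theorem mem_kernel_of_pform_eq_zero_general (t : ℝ) (x y : Fin 3 → ℝ) (h : pform t x y = 0) :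
    (Phi t (vecMulVec x x)).mulVec y = 0 :=
  ((posSemidef_Phi_vecMulVec t x).dotProduct_mulVec_zero_iff y).mp (by simpa [pform] using h)

/-- For `t ∉ {-1, 0, 1}` and nonzero `x, y ∈ ℝ³`, if `p_t(x, y) = 0` then `y` lies in the
kernel of the positive semidefinite matrix `Φ_t(xxᵀ)`. -/
theorem mem_kernel_of_pform_eq_zero (t : ℝ) (ht : t ∉ ({-1, 0, 1} : Set ℝ))
    (x y : Fin 3 → ℝ) (hx : x ≠ 0) (hy : y ≠ 0) (h : pform t x y = 0) :
    (Phi t (vecMulVec x x)).mulVec y = 0 :=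
  mem_kernel_of_pform_eq_zero_general t x y h
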